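/- Let z be a nonzero real number, let a be a real number that is not a nonpositive integer, and let d ≥ 1 be an integer. If c is a real number and there exists a polynomial q with real coefficients such that for every integer n ≥ 0, ∑_{k=0}^{n−1} (k^d − c)·z^k / a^{(k)} = q(n)·z^n / a^{(n)} − q(0), then c equals the d-th iterated derivative at 0 of f_{a,z}(x) = exp(−z − (a−1)x + z·e^x). -/

import Mathlib

/-!
For a polynomial `P` let `S(P) = ∑ₘ P(m) zᵐ / m!` (`expSum z P` below; it is `e^z 𝔼 P(N)` for `N`
Poisson of mean `z`). It satisfies the Stein identity `S(X P) = z S(P(X + 1))`. Expanding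
`f_{a,z}(x) = e^{-z} ∑ₘ zᵐ/m! e^{(m + 1 - a) x}` gives `f_{a,z}^{(d)}(0) = e^{-z} S((X + 1 - a)^d)`.
On the other side, subtracting consecutive instances of the telescoping identity gives
`z q(x + 1) = (x + a) (q(x) + x^d - c)` at every natural `x`, hence as polynomials. Shifting by
`-a` and applying the Stein identity, the `q`-terms cancel and leave `S((X + 1 - a)^d - c) = 0`,
i.e. `S((X + 1 - a)^d) = c e^z`.
-/

open Polynomial Filter Asymptotics Nat

/-- Rising factorial `a^{(k)} = a (a+1) ⋯ (a+k-1)` of a real number. -/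
def risingFactorial (a : ℝ) : ℕ → ℝ
  | 0 => 1
  | k + 1 => risingFactorial a k * (a + k)

theorem summable_pow_mul_pow_div_factorial (z : ℝ) (i : ℕ) :
    Summable fun m : ℕ => (m : ℝ) ^ i * z ^ m / m ! := by
  have hbdd : (fun m : ℕ => (m : ℝ) ^ i * (1 / 2 : ℝ) ^ m) =O[atTop] fun _ => (1 : ℝ) :=
    (tendsto_pow_const_mul_const_pow_of_abs_lt_one i (by norm_num)).isBigO_one ℝ
  refine summable_of_isBigO_nat (Real.summable_pow_div_factorial (2 * z)) ?_
  refine (hbdd.mul (isBigO_refl (fun m : ℕ => (2 * z) ^ m / m !) atTop)).congr (fun m => ?_)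
    (fun m => one_mul _)
  rw [← mul_div_assoc, mul_assoc, ← mul_pow]
  ring

theorem summable_eval_mul_pow_div_factorial (z : ℝ) (P : ℝ[X]) :
    Summable fun m : ℕ => P.eval (m : ℝ) * z ^ m / m ! := by
  induction P using Polynomial.induction_on' with
  | add P Q hP hQ => simpa only [eval_add, add_mul, add_div] using hP.add hQ
  | monomial n c =>
    simpa only [eval_monomial, mul_assoc, mul_div_assoc] using
      (summable_pow_mul_pow_div_factorial z n).mul_left c

noncomputable def expSum (z : ℝ) : ℝ[X] →ₗ[ℝ] ℝ where
  toFun P := ∑' m : ℕ, P.eval (m : ℝ) * z ^ m / (m ! : ℝ)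
  map_add' P Q := by
    simp only [eval_add, add_mul, add_div]
    exact (summable_eval_mul_pow_div_factorial z P).tsum_add
      (summable_eval_mul_pow_div_factorial z Q)
  map_smul' c P := by
    simp only [eval_smul, smul_eq_mul, RingHom.id_apply, mul_assoc, mul_div_assoc, tsum_mul_left]

theorem expSum_apply (z : ℝ) (P : ℝ[X]) :
    expSum z P = ∑' m : ℕ, P.eval (m : ℝ) * z ^ m / m ! := rfl

theorem expSum_C (z c : ℝ) : expSum z (C c) = c * Real.exp z := by
  simp only [expSum_apply, eval_C, mul_div_assoc, tsum_mul_left, Real.exp_eq_exp_ℝ,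
    NormedSpace.exp_eq_tsum_div]

theorem expSum_X_mul (z : ℝ) (P : ℝ[X]) :
    expSum z (X * P) = z * expSum z (P.comp (X + 1)) := by
  rw [expSum_apply, (summable_eval_mul_pow_div_factorial z (X * P)).tsum_eq_zero_add,
    expSum_apply, ← tsum_mul_left]
  simp only [eval_mul, eval_X, eval_comp, eval_add, eval_one, Nat.cast_zero, zero_mul, zero_div,
    zero_add, Nat.cast_succ, Nat.factorial_succ, Nat.cast_mul, pow_succ]
  congr 1
  ext m
  field_simp

theorem hasDerivAt_exp_mul_add_mul_exp (z β x : ℝ) :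
    HasDerivAt (fun x => Real.exp (-z + β * x + z * Real.exp x))
      (β * Real.exp (-z + β * x + z * Real.exp x)
        + z * Real.exp (-z + (β + 1) * x + z * Real.exp x)) x := by
  have hexp : HasDerivAt (fun x => -z + β * x + z * Real.exp x) (β + z * Real.exp x) x := by
    have h := (((hasDerivAt_id x).const_mul β).const_add (-z)).add
      ((Real.hasDerivAt_exp x).const_mul z)
    rw [mul_one] at h
    exact h
  have hshift : Real.exp (-z + (β + 1) * x + z * Real.exp x)
      = Real.exp x * Real.exp (-z + β * x + z * Real.exp x) := by
    rw [← Real.exp_add]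
    ring_nf
  rw [hshift]
  convert hexp.exp using 1
  ring

theorem iteratedDeriv_exp_mul_add_mul_exp (z : ℝ) (n : ℕ) (β : ℝ) :
    iteratedDeriv n (fun x => Real.exp (-z + β * x + z * Real.exp x)) 0
      = Real.exp (-z) * expSum z ((X + C β) ^ n) := by
  induction n generalizing β with
  | zero =>
    rw [iteratedDeriv_zero, pow_zero, ← C_1, expSum_C, one_mul, ← Real.exp_add]
    simp
  | succ n ih =>
    have hsmooth : ∀ γ, ContDiff ℝ n fun x => Real.exp (-z + γ * x + z * Real.exp x) :=
      fun γ => by fun_prop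
    rw [iteratedDeriv_succ', funext fun x => (hasDerivAt_exp_mul_add_mul_exp z β x).deriv,
      iteratedDeriv_fun_add (contDiff_const.mul (hsmooth β)).contDiffAt
        (contDiff_const.mul (hsmooth (β + 1))).contDiffAt,
      iteratedDeriv_const_mul_field, iteratedDeriv_const_mul_field, ih, ih]
    have hrec : (X + C β) ^ (n + 1) = X * (X + C β) ^ n + β • (X + C β) ^ n := by
      rw [smul_eq_C_mul]
      ring
    rw [hrec, (expSum z).map_add, expSum_X_mul, (expSum z).map_smul, smul_eq_mul]
    simp only [add_comp, pow_comp, X_comp, C_comp, C_add, C_1]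
    ring_nf

theorem expSum_comp_eq_zero {z a : ℝ} (hz : z ≠ 0) {p q : ℝ[X]}
    (h : C z * q.comp (X + 1) = (X + C a) * (q + p)) :
    expSum z (p.comp (X + C (1 - a))) = 0 := by
  have hcomp : (X - C a).comp (X + 1) = X + C (1 - a) := by
    simp only [sub_comp, X_comp, C_comp, C_sub, C_1]
    ring
  have hshift : X * (q + p).comp (X - C a) = z • q.comp (X + C (1 - a)) := by
    have h' := congrArg (·.comp (X - C a)) h
    have hX : (X + C a).comp (X - C a) = X := by simp
    have hX1 : (X + 1).comp (X - C a) = X + C (1 - a) := by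
      simp only [add_comp, X_comp, one_comp, C_sub, C_1]
      ring
    simp only [mul_comp, C_comp, comp_assoc, hX, hX1] at h'
    rw [← h', smul_eq_C_mul]
  have hz_mul : z * expSum z ((q + p).comp (X + C (1 - a)))
      = z * expSum z (q.comp (X + C (1 - a))) := by
    calc z * expSum z ((q + p).comp (X + C (1 - a)))
        = z * expSum z (((q + p).comp (X - C a)).comp (X + 1)) := by rw [comp_assoc, hcomp]
      _ = expSum z (X * (q + p).comp (X - C a)) := (expSum_X_mul z _).symm
      _ = z * expSum z (q.comp (X + C (1 - a))) := by rw [hshift, map_smul, smul_eq_mul]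
  simpa only [add_comp, map_add, add_eq_left] using mul_left_cancel₀ hz hz_mul

theorem risingFactorial_ne_zero {a : ℝ} (ha : ∀ m : ℕ, a ≠ -(m : ℝ)) (n : ℕ) :
    risingFactorial a n ≠ 0 := by
  induction n with
  | zero => exact one_ne_zero
  | succ n ih => exact mul_ne_zero ih fun h => ha n (by linarith)

theorem mul_eval_add_one_of_sum_range_eq {z a : ℝ} (hz : z ≠ 0) (ha : ∀ m : ℕ, a ≠ -(m : ℝ))
    {q : ℝ[X]} {t : ℕ → ℝ}
    (h : ∀ n : ℕ, ∑ k ∈ Finset.range n, t k * z ^ k / risingFactorial a k =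
      q.eval (n : ℝ) * z ^ n / risingFactorial a n - q.eval 0) (n : ℕ) :
    z * q.eval ((n : ℝ) + 1) = ((n : ℝ) + a) * (q.eval (n : ℝ) + t n) := by
  have hstep := h (n + 1)
  rw [Finset.sum_range_succ, h n, risingFactorial, Nat.cast_succ, pow_succ] at hstep
  have hr := risingFactorial_ne_zero ha n
  have hn : a + n ≠ 0 := fun h => ha n (by linarith)
  field_simp at hstep
  apply mul_left_cancel₀ (pow_ne_zero n hz)
  linear_combination -hstep

theorem stmt_7_general (z a : ℝ) (hz : z ≠ 0) (ha : ∀ m : ℕ, a ≠ -(m : ℝ)) (d : ℕ)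
    (c : ℝ)
    (h : ∃ q : Polynomial ℝ, ∀ n : ℕ,
      ∑ k ∈ Finset.range n, (((k : ℝ) ^ d - c) * z ^ k / risingFactorial a k) =
        q.eval (n : ℝ) * z ^ n / risingFactorial a n - q.eval 0) :
    c = iteratedDeriv d (fun x : ℝ => Real.exp (-z - (a - 1) * x + z * Real.exp x)) 0 := by
  obtain ⟨q, hq⟩ := h
  have hrec : C z * q.comp (X + 1) = (X + C a) * (q + (X ^ d - C c)) := by
    refine eq_of_infinite_eval_eq _ _ ((Set.infinite_range_of_injective Nat.cast_injective).mono ?_)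
    rintro _ ⟨n, rfl⟩
    simpa using mul_eval_add_one_of_sum_range_eq hz ha hq n
  have hmoment : expSum z ((X + C (1 - a)) ^ d) = c * Real.exp z := by
    simpa [sub_comp, sub_eq_zero, expSum_C] using expSum_comp_eq_zero hz hrec
  have hf : (fun x => Real.exp (-z - (a - 1) * x + z * Real.exp x))
      = fun x => Real.exp (-z + (1 - a) * x + z * Real.exp x) := by
    ext x
    ring_nf
  rw [hf, iteratedDeriv_exp_mul_add_mul_exp, hmoment, mul_left_comm, ← Real.exp_add,
    neg_add_cancel, Real.exp_zero, mul_one]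

theorem stmt_7 (z a : ℝ) (hz : z ≠ 0) (ha : ∀ m : ℕ, a ≠ -(m : ℝ)) (d : ℕ) (hd : 1 ≤ d)
    (c : ℝ)
    (h : ∃ q : Polynomial ℝ, ∀ n : ℕ,
      ∑ k ∈ Finset.range n, (((k : ℝ) ^ d - c) * z ^ k / risingFactorial a k) =
        q.eval (n : ℝ) * z ^ n / risingFactorial a n - q.eval 0) :
    c = iteratedDeriv d (fun x : ℝ => Real.exp (-z - (a - 1) * x + z * Real.exp x)) 0 :=
  stmt_7_general z a hz ha d c h
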